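/- arXiv:1206.0550 — 4 statements merged into one kernel-verified Lean document; each statement's English description precedes it below -/
import Mathlib

section
/- Let G be a connected simple graph on a finite vertex type V and let n ≥ 1. Let n·G denote the disjoint union of n copies of G, namely the simple graph on Fin n × V in which (i, x) is adjacent to (j, y) iff i = j and x is adjacent to y in G. Then ℏ(n·G) = Nat.choose (ℏ(G) + n - 1) n. -/
/-- The underlying simple graph of a relation: distinct `x, y` are adjacent iff
`R x y` or `R y x`. -/
def underGraph {V : Type*} (R : V → V → Prop) : SimpleGraph V where
  Adj x y := x ≠ y ∧ (R x y ∨ R y x)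
  symm := ⟨fun _ _ h => ⟨h.1.symm, h.2.symm⟩⟩
  loopless := ⟨fun _ h => h.1 rfl⟩

/-- A preorder relation: a reflexive and transitive relation. -/
def IsPreorderRel {V : Type*} (R : V → V → Prop) : Prop :=
  Reflexive R ∧ Transitive R

/-- `tau G` is the number of preorder relations on `V` whose underlying graph equals `G`. -/
noncomputable def tau {V : Type*} (G : SimpleGraph V) : ℕ :=
  Nat.card {R : V → V → Prop // IsPreorderRel R ∧ underGraph R = G}
/-- Isomorphism of preorder relations with the same underlying graph, as a setoid. -/
def preSetoid {V : Type*} (G : SimpleGraph V) :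
    Setoid {R : V → V → Prop // IsPreorderRel R ∧ underGraph R = G} where
  r R R' := ∃ σ : V ≃ V, ∀ x y, R.1 x y ↔ R'.1 (σ x) (σ y)
  iseqv := by
    constructor
    · intro R; exact ⟨Equiv.refl V, fun x y => Iff.rfl⟩
    · rintro R R' ⟨σ, h⟩
      exact ⟨σ.symm, fun x y => by
        simpa using (h (σ.symm x) (σ.symm y)).symm⟩
    · rintro R R' R'' ⟨σ, h⟩ ⟨σ', h'⟩
      exact ⟨σ.trans σ', fun x y => (h x y).trans (h' (σ x) (σ y))⟩

/-- `hbar G` is the number of isomorphism classes of preorder relations on `V`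
whose underlying graph equals `G`. -/
noncomputable def hbar {V : Type*} (G : SimpleGraph V) : ℕ :=
  Nat.card (Quotient (preSetoid G))

/-- The disjoint union of `n` copies of a graph `G`, on the vertex type `Fin n × V`. -/
def copiesGraph (n : ℕ) {V : Type*} (G : SimpleGraph V) : SimpleGraph (Fin n × V) where
  Adj x y := x.1 = y.1 ∧ G.Adj x.2 y.2
  symm := ⟨fun _ _ h => ⟨h.1.symm, h.2.symm⟩⟩
  loopless := ⟨fun _ h => G.loopless.irrefl _ h.2⟩


/-! A preorder whose underlying graph is `n·G` relates only vertices of the same copy, so it is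
an `n`-tuple of preorders with underlying graph `G`. Since `G` is connected, an isomorphism
between two such preorders is an automorphism of `n·G`, hence permutes the copies and restricts
to isomorphisms between them. Isomorphism classes for `n·G` are therefore multisets of size `n`
of isomorphism classes for `G`, and there are `C(ℏ(G) + n - 1, n)` of those. -/

open Finset

section SymOfFn

variable {α : Type*} {n : ℕ}

def Sym.ofFn (f : Fin n → α) : Sym α n :=
  ⟨Multiset.map f univ.val, by simp⟩

theorem Sym.ofFn_surjective : Function.Surjective (Sym.ofFn : (Fin n → α) → Sym α n) := by
  rintro ⟨m, hm⟩
  induction m using Quot.induction_on with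
  | h l =>
    subst hm
    refine ⟨l.get, Subtype.ext ?_⟩
    change Multiset.map l.get univ.val = (l : Multiset α)
    rw [Fin.univ_val_map, List.ofFn_get]

theorem Multiset.exists_perm_of_map_univ_eq {ι : Type*} [Fintype ι] {u v : ι → α}
    (h : Multiset.map u univ.val = Multiset.map v univ.val) :
    ∃ π : Equiv.Perm ι, ∀ i, u i = v (π i) := by
  classical
  have hfiber : ∀ a, Fintype.card {i // u i = a} = Fintype.card {i // v i = a} := by
    intro a
    simpa [Multiset.count_map, Fintype.card_subtype, Finset.card, Finset.filter_val, eq_comm]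
      using congrArg (Multiset.count a) h
  exact ⟨Equiv.ofFiberEquiv (fun a => Fintype.equivOfCardEq (hfiber a)),
    fun i => (Equiv.ofFiberEquiv_map _ i).symm⟩

theorem Sym.ofFn_eq_ofFn_iff {f g : Fin n → α} :
    Sym.ofFn f = Sym.ofFn g ↔ ∃ π : Equiv.Perm (Fin n), ∀ i, f i = g (π i) := by
  refine ⟨fun h => Multiset.exists_perm_of_map_univ_eq (congrArg Subtype.val h), ?_⟩
  rintro ⟨π, hπ⟩
  refine Subtype.ext ?_
  calc Multiset.map f univ.val = Multiset.map (g ∘ π) univ.val := by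
        rw [show f = g ∘ π from funext hπ]
    _ = Multiset.map g univ.val := by
        rw [← Multiset.map_map, Multiset.map_univ_val_equiv]

/-- Tuples up to reordering and componentwise equivalence are unordered tuples of classes. -/
theorem Setoid.card_quotient_eq_card_sym {β : Type*} (s : Setoid α) (t : Setoid β)
    (e : β ≃ (Fin n → α))
    (h : ∀ b b', t b b' ↔ ∃ π : Equiv.Perm (Fin n), ∀ i, s (e b i) (e b' (π i))) :
    Nat.card (Quotient t) = Nat.card (Sym (Quotient s) n) := by
  let Φ : β → Sym (Quotient s) n := fun b => Sym.ofFn fun i => ⟦e b i⟧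
  have ht : t = Setoid.ker Φ := by
    ext b b'
    simp only [h, Setoid.ker_def, Φ, Sym.ofFn_eq_ofFn_iff, Quotient.eq]
  have hΦ : Function.Surjective Φ :=
    Sym.ofFn_surjective.comp ((Quotient.mk_surjective.comp_left).comp e.surjective)
  subst ht
  exact Nat.card_congr (Setoid.quotientKerEquivOfSurjective Φ hΦ)

end SymOfFn

abbrev GraphPreorder {V : Type*} (G : SimpleGraph V) :=
  {R : V → V → Prop // IsPreorderRel R ∧ underGraph R = G}

theorem underGraph_adj_iff {V : Type*} {R : V → V → Prop} {H : SimpleGraph V}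
    (hR : underGraph R = H) {p q : V} : H.Adj p q ↔ p ≠ q ∧ (R p q ∨ R q p) := by
  subst hR; rfl

theorem underGraph_adj_map_iff {V W : Type*} {R : V → V → Prop} {R' : W → W → Prop}
    (σ : V ≃ W) (hσ : ∀ x y, R x y ↔ R' (σ x) (σ y)) (p q : V) :
    (underGraph R').Adj (σ p) (σ q) ↔ (underGraph R).Adj p q :=
  and_congr (not_congr σ.apply_eq_iff_eq) (or_congr (hσ p q).symm (hσ q p).symm)

section Copies

variable {V : Type*} {n : ℕ} {G : SimpleGraph V}

theorem copiesGraph_reachable_iff (hG : G.Connected) {p q : Fin n × V} :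
    (copiesGraph n G).Reachable p q ↔ p.1 = q.1 := by
  constructor
  · rintro ⟨w⟩
    induction w with
    | nil => rfl
    | cons h _ ih => exact h.1.trans ih
  · obtain ⟨i, x⟩ := p
    obtain ⟨j, y⟩ := q
    rintro (rfl : i = j)
    exact (hG.preconnected x y).map
      (⟨fun z => (i, z), fun h => ⟨rfl, h⟩⟩ : G →g copiesGraph n G)

theorem exists_perm_fst_of_iso_copiesGraph (hG : G.Connected)
    (φ : copiesGraph n G ≃g copiesGraph n G) :
    ∃ π : Equiv.Perm (Fin n), ∀ p, (φ p).1 = π p.1 := by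
  have hfst : ∀ p q, (φ p).1 = (φ q).1 ↔ p.1 = q.1 := fun p q => by
    rw [← copiesGraph_reachable_iff hG, ← copiesGraph_reachable_iff hG, φ.reachable_iff]
  obtain ⟨x₀⟩ := hG.nonempty
  have hinj : Function.Injective fun i : Fin n => (φ (i, x₀)).1 :=
    fun i j h => (hfst (i, x₀) (j, x₀)).mp h
  exact ⟨Equiv.ofBijective _ (Finite.injective_iff_bijective.mp hinj),
    fun p => (hfst p (p.1, x₀)).mpr rfl⟩

theorem Equiv.exists_prodShear_of_fst {W : Type*} (σ : W × V ≃ W × V) (π : Equiv.Perm W)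
    (hσ : ∀ p, (σ p).1 = π p.1) : ∃ τ : W → Equiv.Perm V, σ = Equiv.prodShear π τ := by
  have hsymm : ∀ q, (σ.symm q).1 = π.symm q.1 := fun q => by
    rw [Equiv.eq_symm_apply, ← hσ, Equiv.apply_symm_apply]
  refine ⟨fun i => ⟨fun x => (σ (i, x)).2, fun y => (σ.symm (π i, y)).2, fun x => ?_,
    fun y => ?_⟩, Equiv.ext fun p => Prod.ext (hσ p) rfl⟩
  · have : (π i, (σ (i, x)).2) = σ (i, x) := Prod.ext (hσ (i, x)).symm rfl
    change (σ.symm (π i, (σ (i, x)).2)).2 = x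
    rw [this, Equiv.symm_apply_apply]
  · have : (i, (σ.symm (π i, y)).2) = σ.symm (π i, y) := Prod.ext (by simp [hsymm]) rfl
    change (σ (i, (σ.symm (π i, y)).2)).2 = y
    rw [this, Equiv.apply_symm_apply]

theorem rel_copies_iff {R : Fin n × V → Fin n × V → Prop}
    (hR : underGraph R = copiesGraph n G) {i j : Fin n} {x y : V} :
    R (i, x) (j, y) ↔ i = j ∧ R (i, x) (i, y) := by
  constructor
  · intro h
    obtain rfl : i = j := by
      by_contra hij
      exact hij ((underGraph_adj_iff hR).mpr ⟨fun h' => hij (congrArg Prod.fst h'), .inl h⟩).1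
    exact ⟨rfl, h⟩
  · rintro ⟨rfl, h⟩
    exact h

def graphPreorderCopiesEquiv : GraphPreorder (copiesGraph n G) ≃ (Fin n → GraphPreorder G) where
  toFun R i := ⟨fun x y => R.1 (i, x) (i, y),
    ⟨fun x => R.2.1.1 _, fun _ _ _ hxy hyz => R.2.1.2 hxy hyz⟩, by
      ext x y
      have := underGraph_adj_iff R.2.2 (p := (i, x)) (q := (i, y))
      simp only [copiesGraph, ne_eq, Prod.mk.injEq, true_and] at this
      exact this.symm⟩
  invFun f := ⟨fun p q => p.1 = q.1 ∧ (f p.1).1 p.2 q.2,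
    ⟨fun p => ⟨rfl, (f p.1).2.1.1 _⟩, by
      rintro ⟨i, x⟩ ⟨j, y⟩ ⟨k, z⟩ ⟨rfl : i = j, hxy⟩ ⟨rfl : i = k, hyz⟩
      exact ⟨rfl, (f i).2.1.2 hxy hyz⟩⟩, by
    ext ⟨i, x⟩ ⟨j, y⟩
    by_cases hij : i = j
    · subst hij
      rw [show (copiesGraph n G).Adj (i, x) (i, y) ↔ G.Adj x y from and_iff_right rfl,
        underGraph_adj_iff (f i).2.2]
      simp [underGraph]
    · simp [underGraph, copiesGraph, hij, Ne.symm hij]⟩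
  left_inv R := Subtype.ext <| funext fun ⟨i, x⟩ => funext fun ⟨j, y⟩ =>
    propext (rel_copies_iff R.2.2).symm
  right_inv f := funext fun i => Subtype.ext <| by simp

theorem preSetoid_copiesGraph_iff (hG : G.Connected) (R R' : GraphPreorder (copiesGraph n G)) :
    preSetoid (copiesGraph n G) R R' ↔ ∃ π : Equiv.Perm (Fin n), ∀ i,
      preSetoid G (graphPreorderCopiesEquiv R i) (graphPreorderCopiesEquiv R' (π i)) := by
  constructor
  · rintro ⟨σ, hσ⟩
    let φ : copiesGraph n G ≃g copiesGraph n G :=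
      ⟨σ, fun {p q} => by simpa only [R.2.2, R'.2.2] using underGraph_adj_map_iff σ hσ p q⟩
    obtain ⟨π, hπ⟩ := exists_perm_fst_of_iso_copiesGraph hG φ
    obtain ⟨τ, rfl⟩ := Equiv.exists_prodShear_of_fst σ π hπ
    exact ⟨π, fun i => ⟨τ i, fun x y => hσ (i, x) (i, y)⟩⟩
  · rintro ⟨π, hπ⟩
    choose τ hτ using hπ
    refine ⟨Equiv.prodShear π τ, fun ⟨i, x⟩ ⟨j, y⟩ => ?_⟩
    change R.1 (i, x) (j, y) ↔ R'.1 (π i, τ i x) (π j, τ j y)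
    rw [rel_copies_iff R.2.2, rel_copies_iff R'.2.2, π.injective.eq_iff]
    refine and_congr_right ?_
    rintro rfl
    exact hτ i x y

end Copies

theorem hbar_copies_general
    {V : Type*} [Fintype V] (G : SimpleGraph V) (hG : G.Connected)
    (n : ℕ) :
    hbar (copiesGraph n G) = Nat.choose (hbar G + n - 1) n := by
  classical
  have : Fintype (Quotient (preSetoid G)) := Fintype.ofFinite _
  rw [hbar, Setoid.card_quotient_eq_card_sym (preSetoid G) _ graphPreorderCopiesEquiv
    (preSetoid_copiesGraph_iff hG), Nat.card_eq_fintype_card, Sym.card_sym_eq_choose, hbar,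
    Nat.card_eq_fintype_card]

/-- For a connected graph `G` and `n ≥ 1`,
`ℏ(n·G) = C(ℏ(G) + n - 1, n)`. -/
theorem hbar_copies
    {V : Type*} [Fintype V] (G : SimpleGraph V) (hG : G.Connected)
    (n : ℕ) (hn : 1 ≤ n) :
    hbar (copiesGraph n G) = Nat.choose (hbar G + n - 1) n :=
  hbar_copies_general G hG n
end

section
/- Let G be a connected simple graph on a finite vertex type V with at least 2 vertices and H a connected simple graph on a finite vertex type W with at least 2 vertices. If both G and H are bipartite (2-colorable), then τ(G □ H) = 2. -/
/-!
In a triangle-free graph `K` every preorder `R` with underlying graph `K` is antisymmetric as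
soon as each edge has an endpoint with a further neighbour (true in a connected graph on at least
three vertices): if `R x y` and `R y x`, any third neighbour of `x` or `y` would close a triangle.
Triangle-freeness then rules out chains `x < y < z`, so `R` orients every edge away from the set
of vertices having an out-neighbour, and adjacent vertices lie on opposite sides of that set. In a
connected bipartite graph such a set is one of the two colour classes, which leaves exactly two
preorders. The box product of connected bipartite graphs is connected and bipartite, and has at
least four vertices.
-/

open Function

lemma Bool.eq_or_eq_of_ne {a c : Bool} (h : a ≠ c) (b : Bool) : a = b ∨ c = b := by
  cases a <;> cases c <;> cases b <;> simp_all

lemma exists_ne_ne_of_three_le_card {V : Type*} [Finite V] (hV : 3 ≤ Nat.card V) (x y : V) :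
    ∃ z, z ≠ x ∧ z ≠ y := by
  have hxy : ({x, y} : Set V).ncard < (Set.univ : Set V).ncard := by
    have := Set.ncard_insert_le x {y}
    rw [Set.ncard_singleton] at this
    rw [Set.ncard_univ]
    omega
  obtain ⟨z, -, hz⟩ := Set.exists_mem_notMem_of_ncard_lt_ncard hxy
  exact ⟨z, by simpa [not_or] using hz⟩

namespace SimpleGraph

variable {V : Type*} {K : SimpleGraph V} {x y z : V}

def orientFrom (K : SimpleGraph V) (S : Set V) (x y : V) : Prop :=
  x = y ∨ K.Adj x y ∧ x ∈ S

lemma isPreorderRel_orientFrom {S : Set V} (hS : ∀ ⦃x y⦄, K.Adj x y → x ∈ S → y ∉ S) :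
    IsPreorderRel (K.orientFrom S) := by
  refine ⟨fun x => Or.inl rfl, ?_⟩
  rintro x y z hxy (rfl | ⟨hyz, hy⟩)
  · exact hxy
  · rcases hxy with rfl | ⟨hxy, hx⟩
    · exact Or.inr ⟨hyz, hy⟩
    · exact absurd hy (hS hxy hx)

lemma underGraph_orientFrom {S : Set V} (hS : ∀ ⦃x y⦄, K.Adj x y → x ∈ S ∨ y ∈ S) :
    underGraph (K.orientFrom S) = K := by
  ext x y
  constructor
  · rintro ⟨hne, (rfl | ⟨h, -⟩) | (rfl | ⟨h, -⟩)⟩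
    · exact absurd rfl hne
    · exact h
    · exact absurd rfl hne
    · exact h.symm
  · intro h
    refine ⟨h.ne, ?_⟩
    rcases hS h with hx | hy
    · exact Or.inl (Or.inr ⟨h, hx⟩)
    · exact Or.inr (Or.inr ⟨h.symm, hy⟩)

lemma mem_of_orientFrom_eq {S T : Set V} (h : K.orientFrom S = K.orientFrom T)
    (hxy : K.Adj x y) (hx : x ∈ S) : x ∈ T := by
  have hT : K.orientFrom S x y := Or.inr ⟨hxy, hx⟩
  rw [h] at hT
  rcases hT with rfl | ⟨-, hx⟩
  · exact (K.irrefl hxy).elim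
  · exact hx

section Coloring

variable (c : K.Coloring Bool)

lemma isPreorderRel_orientFrom_colorClass (b : Bool) :
    IsPreorderRel (K.orientFrom (c.colorClass b)) :=
  isPreorderRel_orientFrom fun _ _ h hx hy => c.valid h (hx.trans hy.symm)

lemma underGraph_orientFrom_colorClass (b : Bool) :
    underGraph (K.orientFrom (c.colorClass b)) = K :=
  underGraph_orientFrom fun _ _ h => Bool.eq_or_eq_of_ne (c.valid h) b

lemma orientFrom_colorClass_injective (hxy : K.Adj x y) :
    Injective fun b => K.orientFrom (c.colorClass b) := by
  intro b b' (h : K.orientFrom _ = K.orientFrom _)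
  rcases Bool.eq_or_eq_of_ne (c.valid hxy) b with hb | hb
  · exact hb.symm.trans (mem_of_orientFrom_eq (x := x) h hxy hb)
  · exact hb.symm.trans (mem_of_orientFrom_eq (x := y) h hxy.symm hb)

lemma Preconnected.exists_eq_colorClass (hK : K.Preconnected) {S : Set V}
    (hS : ∀ ⦃x y⦄, K.Adj x y → (x ∈ S ↔ y ∉ S)) (x₀ : V) :
    ∃ b, S = c.colorClass b := by
  classical
  let cS : K.Coloring Bool :=
    Coloring.mk (fun x => decide (x ∈ S)) fun h => by simp [hS h]
  have hcS : ∀ x, cS x = decide (x ∈ S) := fun _ => rfl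
  have hpar : ∀ x, (c x₀ ↔ c x) ↔ (x₀ ∈ S ↔ x ∈ S) := fun x => by
    have p := (hK x₀ x).some
    rw [← c.even_length_iff_congr p, cS.even_length_iff_congr p]
    simp only [hcS, decide_eq_true_eq]
  refine ⟨if x₀ ∈ S then c x₀ else !c x₀, Set.ext fun x => ?_⟩
  have := hpar x
  rw [Coloring.colorClass, Set.mem_setOf_eq]
  by_cases h : x₀ ∈ S <;> cases hx₀ : c x₀ <;> cases hx : c x <;> simp_all

end Coloring

lemma CliqueFree.not_adj_of_adj_of_adj (hK3 : K.CliqueFree 3) (hxy : K.Adj x y)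
    (hxz : K.Adj x z) : ¬K.Adj y z := by
  classical
  exact fun hyz => hK3 {x, y, z} (is3Clique_triple_iff.2 ⟨hxy, hxz, hyz⟩)

lemma Preconnected.exists_adj_mem_notMem (hK : K.Preconnected) {S : Set V} (hx : x ∈ S)
    (hy : y ∉ S) : ∃ a ∈ S, ∃ b ∉ S, K.Adj a b := by
  obtain ⟨d, -, ha, hb⟩ := (hK x y).some.exists_boundary_dart S hx hy
  exact ⟨_, ha, _, hb, d.adj⟩

section BoxProd

variable {W : Type*} {G : SimpleGraph V} {H : SimpleGraph W}

def Coloring.boxProd {α : Type*} [Add α] [IsCancelAdd α] (cG : G.Coloring α)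
    (cH : H.Coloring α) : (G □ H).Coloring α :=
  Coloring.mk (fun p => cG p.1 + cH p.2) fun h => by
    rcases boxProd_adj.1 h with ⟨hG, he⟩ | ⟨hH, he⟩
    · rw [he]
      exact fun h => cG.valid hG (add_right_cancel h)
    · rw [he]
      exact fun h => cH.valid hH (add_left_cancel h)

lemma Colorable.boxProd {n : ℕ} (hG : G.Colorable n) (hH : H.Colorable n) :
    (G □ H).Colorable n :=
  ⟨hG.some.boxProd hH.some⟩

end BoxProd

end SimpleGraph

open SimpleGraph

section PreorderOfGraph

variable {V : Type*} {K : SimpleGraph V} {R : V → V → Prop} {x y z : V}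

lemma adj_iff_of_underGraph_eq (hRK : underGraph R = K) :
    K.Adj x y ↔ x ≠ y ∧ (R x y ∨ R y x) := by
  subst hRK
  rfl

lemma eq_of_rel_of_rel_of_adj (hR : Transitive R) (hRK : underGraph R = K)
    (hK3 : K.CliqueFree 3) (hxy : R x y) (hyx : R y x) (hxz : K.Adj x z) (hzy : z ≠ y) :
    x = y := by
  by_contra hne
  have hyz : K.Adj y z := by
    rcases ((adj_iff_of_underGraph_eq hRK).1 hxz).2 with h | h
    · exact (adj_iff_of_underGraph_eq hRK).2 ⟨hzy.symm, Or.inl (hR hyx h)⟩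
    · exact (adj_iff_of_underGraph_eq hRK).2 ⟨hzy.symm, Or.inr (hR h hxy)⟩
  have hxy' : K.Adj x y := (adj_iff_of_underGraph_eq hRK).2 ⟨hne, Or.inl hxy⟩
  exact hK3.not_adj_of_adj_of_adj hxy' hxz hyz

lemma eq_of_rel_of_rel [Finite V] (hR : Transitive R) (hRK : underGraph R = K)
    (hK3 : K.CliqueFree 3) (hK : K.Preconnected) (hV : 3 ≤ Nat.card V)
    (hxy : R x y) (hyx : R y x) : x = y := by
  by_contra hne
  obtain ⟨w, hwx, hwy⟩ := exists_ne_ne_of_three_le_card hV x y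
  obtain ⟨a, ha, b, hb, hab⟩ :=
    hK.exists_adj_mem_notMem (Set.mem_insert x {y}) (by simp [hwx, hwy] : w ∉ {x, y})
  simp only [Set.mem_insert_iff, Set.mem_singleton_iff, not_or] at ha hb
  rcases ha with rfl | rfl
  · exact hne (eq_of_rel_of_rel_of_adj hR hRK hK3 hxy hyx hab hb.2)
  · exact hne (eq_of_rel_of_rel_of_adj hR hRK hK3 hyx hxy hab hb.1).symm

lemma eq_or_eq_of_rel_of_rel (hR : Transitive R) (hRK : underGraph R = K)
    (hK3 : K.CliqueFree 3) (hanti : ∀ ⦃x y⦄, R x y → R y x → x = y)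
    (hxy : R x y) (hyz : R y z) : x = y ∨ y = z := by
  by_contra! hne
  have hxz : x ≠ z := by
    rintro rfl
    exact hne.1 (hanti hxy hyz)
  exact hK3.not_adj_of_adj_of_adj ((adj_iff_of_underGraph_eq hRK).2 ⟨hne.1, Or.inl hxy⟩)
    ((adj_iff_of_underGraph_eq hRK).2 ⟨hxz, Or.inl (hR hxy hyz)⟩)
    ((adj_iff_of_underGraph_eq hRK).2 ⟨hne.2, Or.inl hyz⟩)

def sourceSet (R : V → V → Prop) : Set V :=
  {x | ∃ y ≠ x, R x y}

lemma notMem_sourceSet_of_rel (hchain : ∀ ⦃x y z⦄, R x y → R y z → x = y ∨ y = z)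
    (hxy : R x y) (hne : x ≠ y) : y ∉ sourceSet R :=
  fun ⟨_, hzy, hyz⟩ => (hchain hxy hyz).elim hne (Ne.symm hzy)

lemma eq_orientFrom_sourceSet (hchain : ∀ ⦃x y z⦄, R x y → R y z → x = y ∨ y = z)
    (hrefl : Reflexive R) (hRK : underGraph R = K) :
    R = K.orientFrom (sourceSet R) := by
  funext x y
  apply propext
  constructor
  · intro h
    by_cases hxy : x = y
    · exact Or.inl hxy
    · exact Or.inr ⟨(adj_iff_of_underGraph_eq hRK).2 ⟨hxy, Or.inl h⟩, y, Ne.symm hxy, h⟩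
  · rintro (rfl | ⟨hxy, hx⟩)
    · exact hrefl x
    · rcases ((adj_iff_of_underGraph_eq hRK).1 hxy).2 with h | h
      · exact h
      · exact absurd hx (notMem_sourceSet_of_rel hchain h hxy.ne')

lemma mem_sourceSet_iff_notMem_of_adj
    (hchain : ∀ ⦃x y z⦄, R x y → R y z → x = y ∨ y = z) (hRK : underGraph R = K)
    (hxy : K.Adj x y) :
    x ∈ sourceSet R ↔ y ∉ sourceSet R := by
  obtain ⟨hne, h | h⟩ := (adj_iff_of_underGraph_eq hRK).1 hxy
  · exact iff_of_true ⟨y, hne.symm, h⟩ (notMem_sourceSet_of_rel hchain h hne)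
  · exact iff_of_false (notMem_sourceSet_of_rel hchain h hne.symm) (not_not.2 ⟨x, hne, h⟩)

lemma setOf_isPreorderRel_underGraph_eq [Finite V] (hK : K.Connected) (hV : 3 ≤ Nat.card V)
    (c : K.Coloring Bool) : {R | IsPreorderRel R ∧ underGraph R = K} =
      Set.range fun b => K.orientFrom (c.colorClass b) := by
  have hK3 : K.CliqueFree 3 := c.colorable.cliqueFree (by norm_num)
  obtain ⟨x₀⟩ := hK.nonempty
  ext R
  constructor
  · rintro ⟨⟨hrefl, htrans⟩, hRK⟩
    have hchain : ∀ ⦃x y z⦄, R x y → R y z → x = y ∨ y = z := fun _ _ _ =>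
      eq_or_eq_of_rel_of_rel htrans hRK hK3 fun _ _ =>
        eq_of_rel_of_rel htrans hRK hK3 hK.preconnected hV
    obtain ⟨b, hb⟩ := hK.preconnected.exists_eq_colorClass c
      (fun _ _ => mem_sourceSet_iff_notMem_of_adj hchain hRK) x₀
    exact ⟨b, by rw [eq_orientFrom_sourceSet hchain hrefl hRK, hb]⟩
  · rintro ⟨b, rfl⟩
    exact ⟨isPreorderRel_orientFrom_colorClass c b, underGraph_orientFrom_colorClass c b⟩

end PreorderOfGraph

theorem tau_eq_two_of_isBipartite {V : Type*} [Finite V] {K : SimpleGraph V}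
    (hK : K.Connected) (hb : K.IsBipartite) (hV : 3 ≤ Nat.card V) : tau K = 2 := by
  let c : K.Coloring Bool := K.recolorOfEquiv finTwoEquiv hb.some
  obtain ⟨x₀⟩ := hK.nonempty
  obtain ⟨w, hw, -⟩ := exists_ne_ne_of_three_le_card hV x₀ x₀
  obtain ⟨x, -, y, -, hxy⟩ := hK.preconnected.exists_adj_mem_notMem (S := {x₀}) rfl hw
  rw [tau, ← Set.coe_ofPred, setOf_isPreorderRel_underGraph_eq hK hV c,
    Nat.card_range_of_injective (orientFrom_colorClass_injective c hxy),
    Nat.card_eq_fintype_card, Fintype.card_bool]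

/-- If both `G` and `H` are bipartite (both connected, each with at least 2 vertices),
then `τ(G □ H) = 2`. -/
theorem tau_boxProd_of_bipartite
    {V W : Type*} [Fintype V] [Fintype W]
    (G : SimpleGraph V) (H : SimpleGraph W)
    (hG : G.Connected) (hH : H.Connected)
    (hV : 2 ≤ Fintype.card V) (hW : 2 ≤ Fintype.card W)
    (hGb : G.Colorable 2) (hHb : H.Colorable 2) :
    tau (G □ H) = 2 := by
  refine tau_eq_two_of_isBipartite (connected_boxProd.2 ⟨hG, hH⟩) (hGb.boxProd hHb) ?_
  rw [Nat.card_prod, Nat.card_eq_fintype_card, Nat.card_eq_fintype_card]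
  nlinarith
end

section
/- Let G be a simple graph on a finite vertex type V with a distinguished vertex u that has at least one neighbor in G, and let H be a simple graph on a finite vertex type W with a distinguished vertex v that has at least one neighbor in H. Let G *_{u=v} H be the amalgamation of G and H along u and v. Then τ(G *_{u=v} H) = 2 · τ_si(G, u) · τ_si(H, v), where τ_si(G, u) is the number of preorder relations on V with underlying graph G in which u is a sink, and similarly for τ_si(H, v). -/
/-- The amalgamation of `G` and `H` along `u ∈ V` and `v ∈ W`, on the vertex type
`V ⊕ {w : W // w ≠ v}` (with `u` identified with `v`). -/
def amalg {V W : Type*} (G : SimpleGraph V) (H : SimpleGraph W) (u : V) (v : W) :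
    SimpleGraph (V ⊕ {w : W // w ≠ v}) where
  Adj x y :=
    match x, y with
    | Sum.inl a, Sum.inl b => G.Adj a b
    | Sum.inr a, Sum.inr b => H.Adj a.1 b.1
    | Sum.inl a, Sum.inr b => a = u ∧ H.Adj v b.1
    | Sum.inr a, Sum.inl b => b = u ∧ H.Adj v a.1
  symm := by
    refine ⟨?_⟩
    rintro (a | a) (b | b) h
    · exact G.adj_symm h
    · exact h
    · exact h
    · exact H.adj_symm h
  loopless := by
    refine ⟨?_⟩
    rintro (a | a) h
    · exact G.irrefl h
    · exact H.irrefl h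

/-- `τ_si(G, v)`: the number of preorder relations on `V` with underlying graph `G`
in which `v` is a sink. -/
noncomputable def tauSink {V : Type*} (G : SimpleGraph V) (v : V) : ℕ :=
  Nat.card {R : V → V → Prop //
    (IsPreorderRel R ∧ underGraph R = G) ∧ ∀ u : V, u ≠ v → ¬ R v u}

open Function

section Preorder

variable {X Y : Type*}

def IsSink (R : X → X → Prop) (c : X) : Prop :=
  ∀ x, x ≠ c → ¬ R c x

lemma IsPreorderRel.flip {R : X → X → Prop} (hR : IsPreorderRel R) :
    IsPreorderRel (flip R) :=
  ⟨fun x => hR.1 x, fun _ _ _ hab hbc => hR.2 hbc hab⟩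

lemma IsPreorderRel.onFun {R : Y → Y → Prop} (hR : IsPreorderRel R) (f : X → Y) :
    IsPreorderRel (R on f) :=
  ⟨fun x => hR.1 (f x), fun _ _ _ hab hbc => hR.2 hab hbc⟩

lemma underGraph_flip (R : X → X → Prop) : underGraph (flip R) = underGraph R := by
  ext x y
  exact and_congr_right fun _ => Or.comm

lemma underGraph_onFun (R : Y → Y → Prop) {f : X → Y} (hf : Injective f) :
    underGraph (R on f) = (underGraph R).comap f := by
  ext x y
  exact and_congr_left fun _ => hf.ne_iff.symm

lemma IsSink.onFun {R : Y → Y → Prop} {f : X → Y} (hf : Injective f) {c : X}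
    (hc : IsSink R (f c)) : IsSink (R on f) c :=
  fun x hx => hc (f x) (hf.ne hx)

variable {K : SimpleGraph X} {R : X → X → Prop} {c : X}

lemma rel_or_rel_of_adj (hK : underGraph R = K) {x y : X} (h : K.Adj x y) : R x y ∨ R y x :=
  (hK ▸ h).2

lemma adj_of_rel (hK : underGraph R = K) {x y : X} (hxy : x ≠ y) (h : R x y) : K.Adj x y :=
  hK ▸ ⟨hxy, Or.inl h⟩

lemma not_isSink_flip (hK : underGraph R = K) (hR : IsSink R c) {x : X} (hcx : K.Adj c x) :
    ¬ IsSink (flip R) c := fun hR' =>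
  (rel_or_rel_of_adj hK hcx).elim (hR x hcx.ne') (hR' x hcx.ne')

lemma side_eq_of_rel (hK : underGraph R = K) {side : X → Bool}
    (hside : ∀ x y, K.Adj x y → x ≠ c → y ≠ c → side x = side y)
    {x y : X} (hxy : R x y) (hx : x ≠ c) (hy : y ≠ c) : side x = side y := by
  obtain rfl | hne := eq_or_ne x y
  · rfl
  · exact hside x y (adj_of_rel hK hne hxy) hx hy

/-- If `c` is adjacent to vertices on both sides of a partition that no other edge crosses,
then `R y c` and `R c y₀` with `y, y₀ ≠ c` cannot both hold: `y` and `y₀` would lie on one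
side, and a neighbour `z` of `c` on the other side is comparable with `c`, hence with `y` or
`y₀`. -/
theorem isSink_or_isSink_flip_of_separates (hR : IsPreorderRel R) (hK : underGraph R = K)
    (side : X → Bool) (hside : ∀ x y, K.Adj x y → x ≠ c → y ≠ c → side x = side y)
    (hnbr : ∀ b, ∃ z, K.Adj c z ∧ side z = b) : IsSink R c ∨ IsSink (flip R) c := by
  by_contra! h
  obtain ⟨⟨y₀, hy₀, hcy₀⟩, ⟨y, hy, hyc⟩⟩ : (∃ y₀, y₀ ≠ c ∧ R c y₀) ∧ ∃ y, y ≠ c ∧ R y c := by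
    simpa [IsSink, flip] using h
  obtain ⟨z, hcz, hz⟩ := hnbr (!side y₀)
  have hzy₀ : side z = side y₀ := by
    rcases rel_or_rel_of_adj hK hcz with hcz' | hzc
    · exact (side_eq_of_rel hK hside (hR.2 hyc hcz') hy hcz.ne').symm.trans
        (side_eq_of_rel hK hside (hR.2 hyc hcy₀) hy hy₀)
    · exact side_eq_of_rel hK hside (hR.2 hzc hcy₀) hcz.ne' hy₀
  exact Bool.not_ne_self _ (hz.symm.trans hzy₀)

/-- Flipping exchanges the preorders in which `c` is a sink with those in which it is not. -/
noncomputable def preorderEquivBoolProdSink (hc : ∃ x, K.Adj c x)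
    (hdich : ∀ R, IsPreorderRel R → underGraph R = K → IsSink R c ∨ IsSink (flip R) c) :
    {R // IsPreorderRel R ∧ underGraph R = K} ≃
      Bool × {R // (IsPreorderRel R ∧ underGraph R = K) ∧ IsSink R c} := by
  classical
  exact
  { toFun R :=
      if h : IsSink R.1 c then (true, ⟨R.1, R.2, h⟩)
      else (false, ⟨flip R.1, ⟨R.2.1.flip, (underGraph_flip _).trans R.2.2⟩,
        (hdich _ R.2.1 R.2.2).resolve_left h⟩)
    invFun p := cond p.1 ⟨p.2.1, p.2.2.1⟩
      ⟨flip p.2.1, p.2.2.1.1.flip, (underGraph_flip _).trans p.2.2.1.2⟩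
    left_inv R := by
      by_cases h : IsSink R.1 c <;> simp [h]
    right_inv := by
      rintro ⟨_ | _, S⟩
      · obtain ⟨x, hx⟩ := hc
        have := not_isSink_flip S.2.1.2 S.2.2 hx
        simp [this]
      · simp [S.2.2] }

theorem tau_eq_two_mul_tauSink (hc : ∃ x, K.Adj c x)
    (hdich : ∀ R, IsPreorderRel R → underGraph R = K → IsSink R c ∨ IsSink (flip R) c) :
    tau K = 2 * tauSink K c := by
  rw [tau, Nat.card_congr (preorderEquivBoolProdSink hc hdich), Nat.card_prod,
    Nat.card_eq_fintype_card (α := Bool), Fintype.card_bool]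
  rfl

end Preorder

section Amalg

variable {V W : Type*} {G : SimpleGraph V} {H : SimpleGraph W} {u : V} {v : W}

open Classical in
noncomputable def amalgInr (u : V) (v : W) (w : W) : V ⊕ {w : W // w ≠ v} :=
  if h : w = v then .inl u else .inr ⟨w, h⟩

@[simp] lemma amalgInr_self : amalgInr u v v = .inl u := by
  simp [amalgInr]

@[simp] lemma amalgInr_of_ne {w : W} (hw : w ≠ v) : amalgInr u v w = .inr ⟨w, hw⟩ := by
  simp [amalgInr, hw]

lemma amalgInr_injective : Injective (amalgInr u v) := by
  intro w₁ w₂ h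
  by_cases h₁ : w₁ = v <;> by_cases h₂ : w₂ = v <;> simp_all

lemma amalg_comap_inl : (amalg G H u v).comap Sum.inl = G := rfl

lemma amalg_comap_amalgInr : (amalg G H u v).comap (amalgInr u v) = H := by
  ext w₁ w₂
  by_cases h₁ : w₁ = v <;> by_cases h₂ : w₂ = v
  all_goals simp_all [amalg, H.adj_comm w₁]

lemma amalg_adj_isLeft_eq {x y : V ⊕ {w : W // w ≠ v}} (h : (amalg G H u v).Adj x y)
    (hx : x ≠ .inl u) (hy : y ≠ .inl u) : x.isLeft = y.isLeft := by
  rcases x with a | a <;> rcases y with b | b <;> simp_all [amalg]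

lemma amalg_exists_adj_isLeft_eq (hu : ∃ x, G.Adj u x) (hv : ∃ w, H.Adj v w) (b : Bool) :
    ∃ z, (amalg G H u v).Adj (.inl u) z ∧ z.isLeft = b := by
  cases b
  · obtain ⟨w, hw⟩ := hv
    exact ⟨.inr ⟨w, hw.ne'⟩, ⟨rfl, hw⟩, rfl⟩
  · obtain ⟨x, hx⟩ := hu
    exact ⟨.inl x, hx, rfl⟩

/-- The only relation in which `inl u` is a sink and whose restrictions to `V` and `W` are `P`
and `Q`. -/
def amalgRel (u : V) (v : W) (P : V → V → Prop) (Q : W → W → Prop) :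
    V ⊕ {w : W // w ≠ v} → V ⊕ {w : W // w ≠ v} → Prop
  | .inl a, .inl b => P a b
  | .inr a, .inr b => Q a b
  | .inl _, .inr _ => False
  | .inr a, .inl b => b = u ∧ Q a v

variable {P : V → V → Prop} {Q : W → W → Prop}

lemma IsPreorderRel.amalgRel (hP : IsPreorderRel P) (hQ : IsPreorderRel Q) (hPu : IsSink P u) :
    IsPreorderRel (amalgRel u v P Q) := by
  refine ⟨?_, ?_⟩
  · rintro (a | a)
    exacts [hP.1 a, hQ.1 a]
  · rintro (a | a) (b | b) (c | c) hab hbc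
    all_goals simp only [_root_.amalgRel] at hab hbc ⊢
    · exact hP.2 hab hbc
    · obtain ⟨rfl, hav⟩ := hab
      exact ⟨by_contra fun hc => hPu c hc hbc, hav⟩
    · exact ⟨hbc.1, hQ.2 hab hbc.2⟩
    · exact hQ.2 hab hbc

lemma isSink_amalgRel (hPu : IsSink P u) : IsSink (amalgRel u v P Q) (.inl u) := by
  rintro (b | b) hb
  exacts [hPu b (by simpa using hb), id]

lemma underGraph_amalgRel (hQv : IsSink Q v) :
    underGraph (amalgRel u v P Q) = amalg (underGraph P) (underGraph Q) u v := by
  ext x y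
  rcases x with a | a <;> rcases y with b | b
  all_goals simp only [underGraph, amalg, amalgRel, ne_eq]
  · simp
  · have := hQv b b.2
    grind
  · have := hQv a a.2
    grind
  · simp [Subtype.ext_iff]

lemma amalgRel_onFun_amalgInr (hP : IsPreorderRel P) (hQ : IsPreorderRel Q) (hQv : IsSink Q v) :
    (amalgRel u v P Q on amalgInr u v) = Q := by
  funext w₁ w₂
  by_cases h₁ : w₁ = v <;> by_cases h₂ : w₂ = v
  all_goals simp_all [IsSink, onFun, amalgRel, hP.1 u, hQ.1 v]

section Restrict

variable {R : V ⊕ {w : W // w ≠ v} → V ⊕ {w : W // w ≠ v} → Prop}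

lemma isLeft_eq_of_rel (hK : underGraph R = amalg G H u v) {x y : V ⊕ {w : W // w ≠ v}}
    (hxy : R x y) (hx : x ≠ .inl u) (hy : y ≠ .inl u) : x.isLeft = y.isLeft :=
  side_eq_of_rel hK (fun _ _ => amalg_adj_isLeft_eq) hxy hx hy

lemma amalgRel_onFun (hK : underGraph R = amalg G H u v) (hR : IsSink R (.inl u)) :
    amalgRel u v (R on Sum.inl) (R on amalgInr u v) = R := by
  funext x y
  rcases x with a | a <;> rcases y with b | b
  · rfl
  · refine propext ⟨False.elim, fun h => ?_⟩
    obtain rfl | ha := eq_or_ne a u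
    · exact hR _ Sum.inr_ne_inl h
    · simpa using isLeft_eq_of_rel hK h (by simpa using ha) Sum.inr_ne_inl
  · obtain rfl | hb := eq_or_ne b u
    · simp [amalgRel, onFun, amalgInr_of_ne a.2]
    · refine propext ⟨fun h => absurd h.1 hb, fun h => ?_⟩
      simpa using isLeft_eq_of_rel hK h Sum.inr_ne_inl (by simpa using hb)
  · simp [amalgRel, onFun, amalgInr_of_ne a.2, amalgInr_of_ne b.2]

end Restrict

noncomputable def amalgSinkEquiv (G : SimpleGraph V) (H : SimpleGraph W) (u : V) (v : W) :
    {R // (IsPreorderRel R ∧ underGraph R = amalg G H u v) ∧ IsSink R (.inl u)} ≃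
      {P // (IsPreorderRel P ∧ underGraph P = G) ∧ IsSink P u} ×
        {Q // (IsPreorderRel Q ∧ underGraph Q = H) ∧ IsSink Q v} where
  toFun R :=
    (⟨R.1 on Sum.inl, ⟨R.2.1.1.onFun _, by rw [underGraph_onFun _ Sum.inl_injective,
        R.2.1.2, amalg_comap_inl]⟩, R.2.2.onFun Sum.inl_injective⟩,
      ⟨R.1 on amalgInr u v, ⟨R.2.1.1.onFun _, by rw [underGraph_onFun _ amalgInr_injective,
        R.2.1.2, amalg_comap_amalgInr]⟩, IsSink.onFun amalgInr_injective (by simpa using R.2.2)⟩)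
  invFun PQ :=
    ⟨amalgRel u v PQ.1.1 PQ.2.1,
      ⟨PQ.1.2.1.1.amalgRel PQ.2.2.1.1 PQ.1.2.2, by
        rw [underGraph_amalgRel PQ.2.2.2, PQ.1.2.1.2, PQ.2.2.1.2]⟩,
      isSink_amalgRel PQ.1.2.2⟩
  left_inv R := Subtype.ext (amalgRel_onFun R.2.1.2 R.2.2)
  right_inv PQ := Prod.ext (Subtype.ext rfl)
    (Subtype.ext (amalgRel_onFun_amalgInr PQ.1.2.1.1 PQ.2.2.1.1 PQ.2.2.2))

theorem tauSink_amalg : tauSink (amalg G H u v) (.inl u) = tauSink G u * tauSink H v :=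
  (Nat.card_congr (amalgSinkEquiv G H u v)).trans (Nat.card_prod _ _)

end Amalg

theorem tau_amalg_general
    {V W : Type*}
    (G : SimpleGraph V) (H : SimpleGraph W) (u : V) (v : W)
    (hu : ∃ x : V, G.Adj u x) (hv : ∃ w : W, H.Adj v w) :
    tau (amalg G H u v) = 2 * tauSink G u * tauSink H v := by
  have hnbr := amalg_exists_adj_isLeft_eq hu hv
  have hcut : ∀ R, IsPreorderRel R → underGraph R = amalg G H u v →
      IsSink R (.inl u) ∨ IsSink (flip R) (.inl u) := fun _ hR hK =>
    isSink_or_isSink_flip_of_separates hR hK Sum.isLeft (fun _ _ => amalg_adj_isLeft_eq) hnbr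
  rw [tau_eq_two_mul_tauSink ((hnbr true).imp fun _ => And.left) hcut, tauSink_amalg,
    mul_assoc]

/-- `τ(G *_{u=v} H) = 2 · τ_si(G, u) · τ_si(H, v)` when `u` and `v` each have a
neighbor. -/
theorem tau_amalg
    {V W : Type*} [Fintype V] [Fintype W]
    (G : SimpleGraph V) (H : SimpleGraph W) (u : V) (v : W)
    (hu : ∃ x : V, G.Adj u x) (hv : ∃ w : W, H.Adj v w) :
    tau (amalg G H u v) = 2 * tauSink G u * tauSink H v :=
  tau_amalg_general G H u v hu hv
end

section
/- Let n ≥ 3 and let Cₙ be the cycle graph on Fin n. Then: if n = 3 then τ(Cₙ) = 13 and ℏ(Cₙ) = 4; if n is odd and n ≥ 5 then τ(Cₙ) = 0 and ℏ(Cₙ) = 0; and if n is even then τ(Cₙ) = 2 and ℏ(Cₙ) = 1. -/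
/-!
In a triangle-free graph `G`, a preorder with underlying graph `G` has no chain `x < y < z` of
distinct elements, since `x` and `z` would be adjacent. If moreover every vertex has two
neighbours, such a preorder is antisymmetric, so every vertex lies either below all of its
neighbours or above all of them. Recording which of the two happens is a bijection between these
preorders and the proper 2-colourings of `G`, and isomorphic preorders correspond to colourings
that differ by an automorphism of `G`.

For `n ≥ 4` the cycle `Cₙ` is triangle-free and connected, so a 2-colouring is determined by its
value at one vertex: there are two of them when `n` is even, exchanged by the rotation
`x ↦ x + 1`, and none when `n` is odd. The triangle `C₃` is settled by exhaustive computation.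
-/

open SimpleGraph

variable {V : Type*} {G : SimpleGraph V}

abbrev GraphPreorders (G : SimpleGraph V) : Type _ :=
  {R : V → V → Prop // IsPreorderRel R ∧ underGraph R = G}

lemma underGraph_adj {R : V → V → Prop} {x y : V} :
    (underGraph R).Adj x y ↔ x ≠ y ∧ (R x y ∨ R y x) := Iff.rfl

def preorderOfColoring (c : G.Coloring Bool) : GraphPreorders G where
  val x y := x = y ∨ G.Adj x y ∧ c x = true
  property := by
    refine ⟨⟨fun x => Or.inl rfl, ?_⟩, ?_⟩
    · rintro x y z (rfl | ⟨hxy, hx⟩) (rfl | ⟨hyz, hy⟩)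
      · exact Or.inl rfl
      · exact Or.inr ⟨hyz, hy⟩
      · exact Or.inr ⟨hxy, hx⟩
      · exact absurd (hx.trans hy.symm) (c.valid hxy)
    · ext x y
      rw [underGraph_adj]
      constructor
      · rintro ⟨hne, (rfl | ⟨h, -⟩) | (rfl | ⟨h, -⟩)⟩
        exacts [absurd rfl hne, h, absurd rfl hne, h.symm]
      · intro h
        have hc := c.valid h
        cases hx : c x
        · exact ⟨h.ne, Or.inr (Or.inr ⟨h.symm, by simpa [hx] using hc.symm⟩)⟩
        · exact ⟨h.ne, Or.inl (Or.inr ⟨h, rfl⟩)⟩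

lemma mk_preorderOfColoring_comp_iso (σ : G ≃g G) (c : G.Coloring Bool) :
    Quotient.mk (preSetoid G) (preorderOfColoring (c.comp σ.toHom)) =
      Quotient.mk (preSetoid G) (preorderOfColoring c) :=
  Quotient.sound ⟨σ, fun x y => by simp [preorderOfColoring, σ.map_adj_iff]⟩

section TriangleFree

variable {R : V → V → Prop} {x y z : V}

lemma adj_of_underGraph_eq (hRG : underGraph R = G) (hne : x ≠ y) (h : R x y) : G.Adj x y :=
  hRG ▸ ⟨hne, Or.inl h⟩

lemma rel_or_rel_of_underGraph_eq (hRG : underGraph R = G) (h : G.Adj x y) : R x y ∨ R y x :=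
  (underGraph_adj.mp (hRG ▸ h)).2

namespace IsPreorderRel

variable (hR : IsPreorderRel R) (hRG : underGraph R = G) (hG : G.CliqueFree 3)
include hR hRG hG

lemma eq_of_rel_of_rel (hxy : x ≠ y) (hyz : y ≠ z) (h₁ : R x y) (h₂ : R y z) : x = z := by
  classical
  by_contra hxz
  exact hG {x, y, z} <| is3Clique_triple_iff.mpr ⟨adj_of_underGraph_eq hRG hxy h₁,
    adj_of_underGraph_eq hRG hxz (hR.2 h₁ h₂), adj_of_underGraph_eq hRG hyz h₂⟩

lemma rel_iff_eq_or_adj : R x y ↔ x = y ∨ G.Adj x y ∧ ∃ w, x ≠ w ∧ R x w := by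
  constructor
  · intro h
    by_cases hxy : x = y
    · exact Or.inl hxy
    · exact Or.inr ⟨adj_of_underGraph_eq hRG hxy h, y, hxy, h⟩
  · rintro (rfl | ⟨hxy, w, hxw, hw⟩)
    · exact hR.1 x
    · rcases rel_or_rel_of_underGraph_eq hRG hxy with h | h
      · exact h
      · obtain rfl := hR.eq_of_rel_of_rel hRG hG hxy.ne.symm hxw h hw
        exact hw

variable (hnbr : ∀ v, (G.neighborSet v).Nontrivial)
include hnbr

lemma antisymm (h₁ : R x y) (h₂ : R y x) : x = y := by
  by_contra hxy
  obtain ⟨z, hz, hzx⟩ := (hnbr y).exists_ne x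
  rcases rel_or_rel_of_underGraph_eq hRG hz with h | h
  · exact hzx (hR.eq_of_rel_of_rel hRG hG hxy (G.ne_of_adj hz) h₁ h).symm
  · exact hzx (hR.eq_of_rel_of_rel hRG hG (G.ne_of_adj hz).symm (Ne.symm hxy) h h₂)

lemma not_exists_rel_of_rel (hxy : x ≠ y) (h : R x y) : ¬ ∃ w, y ≠ w ∧ R y w := by
  rintro ⟨w, hyw, hw⟩
  obtain rfl := hR.eq_of_rel_of_rel hRG hG hxy hyw h hw
  exact hxy (hR.antisymm hRG hG hnbr h hw)

end IsPreorderRel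

variable (hG : G.CliqueFree 3) (hnbr : ∀ v, (G.neighborSet v).Nontrivial)

open Classical in
noncomputable def coloringOfPreorder (R : GraphPreorders G) : G.Coloring Bool :=
  Coloring.mk (fun x => decide (∃ y, x ≠ y ∧ R.1 x y)) fun {x y} h => by
    obtain ⟨R, hR, hRG⟩ := R
    rcases rel_or_rel_of_underGraph_eq hRG h with hxy | hyx
    · simpa [hR.not_exists_rel_of_rel hRG hG hnbr h.ne hxy] using ⟨y, h.ne, hxy⟩
    · simpa [hR.not_exists_rel_of_rel hRG hG hnbr h.ne.symm hyx] using ⟨x, h.ne.symm, hyx⟩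

noncomputable def graphPreordersEquivColoring : GraphPreorders G ≃ G.Coloring Bool where
  toFun := coloringOfPreorder hG hnbr
  invFun := preorderOfColoring
  left_inv R := by
    obtain ⟨R, hR, hRG⟩ := R
    ext x y
    simp [preorderOfColoring, coloringOfPreorder, Coloring.mk,
      hR.rel_iff_eq_or_adj hRG hG (x := x) (y := y)]
  right_inv c := by
    classical
    ext x
    obtain ⟨y, hy⟩ := (hnbr x).nonempty
    change decide (∃ y, x ≠ y ∧ (x = y ∨ G.Adj x y ∧ c x = true)) = c x
    rw [Bool.eq_iff_iff, decide_eq_true_iff]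
    exact ⟨fun ⟨_, hne, h⟩ => (h.resolve_left hne).2,
      fun hx => ⟨y, G.ne_of_adj hy, Or.inr ⟨hy, hx⟩⟩⟩

include hG hnbr in
lemma hbar_eq_one_of_forall_exists_iso (c₀ : G.Coloring Bool)
    (hiso : ∀ c c' : G.Coloring Bool, ∃ σ : G ≃g G, c' = c.comp σ.toHom) : hbar G = 1 := by
  let e := graphPreordersEquivColoring hG hnbr
  refine Nat.card_eq_one_iff_unique.mpr ⟨⟨fun q q' => ?_⟩, ⟨Quotient.mk _ (e.symm c₀)⟩⟩
  induction q using Quotient.ind with | _ R => ?_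
  induction q' using Quotient.ind with | _ R' => ?_
  obtain ⟨σ, hσ⟩ := hiso (e R') (e R)
  rw [← e.symm_apply_apply R, ← e.symm_apply_apply R', hσ]
  exact mk_preorderOfColoring_comp_iso σ (e R')

end TriangleFree

lemma Fin.val_sub_cases {n : ℕ} (a b : Fin n) :
    b.val ≤ a.val ∧ (a - b).val = a.val - b.val ∨
      a.val < b.val ∧ (a - b).val = n + a.val - b.val := by
  rcases le_or_gt b.val a.val with h | h
  · exact Or.inl ⟨h, Fin.coe_sub_iff_le.mpr h⟩
  · exact Or.inr ⟨h, Fin.coe_sub_iff_lt.mpr h⟩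

namespace SimpleGraph

lemma Connected.eq_of_coloring_apply_eq (hconn : G.Connected) {c c' : G.Coloring Bool} {u : V}
    (h : c u = c' u) : c = c' := by
  ext v
  obtain ⟨p⟩ := hconn.preconnected u v
  have h₁ := c.even_length_iff_congr p
  have h₂ := c'.even_length_iff_congr p
  rw [h] at h₁
  rw [Bool.eq_iff_iff]
  tauto

lemma Connected.card_coloring_bool (hconn : G.Connected) (c : G.Coloring Bool) :
    Nat.card (G.Coloring Bool) = 2 := by
  obtain ⟨u⟩ := hconn.nonempty
  have hbij : Function.Bijective fun c' : G.Coloring Bool => c' u := by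
    refine ⟨fun c₁ c₂ h => hconn.eq_of_coloring_apply_eq h, fun b => ?_⟩
    by_cases hb : c u = b
    · exact ⟨c, hb⟩
    · exact ⟨G.recolorOfEquiv Equiv.boolNot c, by simpa [Bool.eq_not_iff] using hb⟩
  rw [Nat.card_eq_of_bijective _ hbij, Nat.card_eq_fintype_card, Fintype.card_bool]

lemma cycleGraph_adj_iff_val {n : ℕ} {u v : Fin (n + 2)} :
    (cycleGraph (n + 2)).Adj u v ↔ u.val + 1 = v.val ∨ v.val + 1 = u.val ∨
      (u.val = 0 ∧ v.val = n + 1) ∨ (v.val = 0 ∧ u.val = n + 1) := by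
  rw [cycleGraph_adj']
  have := u.isLt; have := v.isLt
  rcases Fin.val_sub_cases u v with ⟨h₁, e₁⟩ | ⟨h₁, e₁⟩ <;>
  rcases Fin.val_sub_cases v u with ⟨h₂, e₂⟩ | ⟨h₂, e₂⟩ <;>
  omega

lemma cycleGraph_cliqueFree_three (n : ℕ) : (cycleGraph (n + 4)).CliqueFree 3 := by
  intro s hs
  obtain ⟨a, b, c, hab, hac, hbc, -⟩ := is3Clique_iff.mp hs
  rw [cycleGraph_adj_iff_val] at hab hac hbc
  omega

lemma cycleGraph_neighborSet_nontrivial (n : ℕ) (v : Fin (n + 3)) :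
    ((cycleGraph (n + 3)).neighborSet v).Nontrivial := by
  have : 1 < ((cycleGraph (n + 3)).neighborFinset v).card := by
    rw [card_neighborFinset_eq_degree, cycleGraph_degree_three_le]
    norm_num
  rwa [Finset.one_lt_card_iff_nontrivial, Finset.Nontrivial, coe_neighborFinset] at this

def cycleGraph.rotation (n : ℕ) : cycleGraph (n + 2) ≃g cycleGraph (n + 2) where
  toEquiv := Equiv.addRight 1
  map_rel_iff' := by simp [cycleGraph_adj]

lemma cycleGraph.exists_iso_coloring_eq_comp (n : ℕ)
    (c c' : (cycleGraph (n + 2)).Coloring Bool) :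
    ∃ σ : cycleGraph (n + 2) ≃g cycleGraph (n + 2), c' = c.comp σ.toHom := by
  have hconn : (cycleGraph (n + 2)).Connected := cycleGraph_connected
  by_cases h : c 0 = c' 0
  · exact ⟨Iso.refl, (hconn.eq_of_coloring_apply_eq h).symm⟩
  · refine ⟨cycleGraph.rotation n, (hconn.eq_of_coloring_apply_eq (u := 0) ?_).symm⟩
    have hc : c (0 + 1) ≠ c 0 := c.valid (by simp [cycleGraph_adj])
    change c (0 + 1) = c' 0
    rw [Bool.eq_not_iff.mpr hc, Bool.eq_not_iff.mpr h, Bool.not_not]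

lemma cycleGraph.isEmpty_coloring_bool_of_odd {n : ℕ} (h : 2 ≤ n) (hn : Odd n) :
    IsEmpty ((cycleGraph n).Coloring Bool) := by
  refine ⟨fun c => ?_⟩
  have := c.colorable.chromaticNumber_le
  rw [chromaticNumber_cycleGraph_of_odd n h hn] at this
  norm_num at this

end SimpleGraph

section Cycle

variable (n : ℕ)

noncomputable def cycleGraphPreordersEquivColoring :
    GraphPreorders (cycleGraph (n + 4)) ≃ (cycleGraph (n + 4)).Coloring Bool :=
  graphPreordersEquivColoring (cycleGraph_cliqueFree_three n)
    (cycleGraph_neighborSet_nontrivial (n + 1))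

lemma tau_cycleGraph_of_even (hn : Even (n + 4)) : tau (cycleGraph (n + 4)) = 2 := by
  rw [tau, Nat.card_congr (cycleGraphPreordersEquivColoring n)]
  exact cycleGraph_connected.card_coloring_bool (cycleGraph.bicoloring_of_even _ hn)

lemma hbar_cycleGraph_of_even (hn : Even (n + 4)) : hbar (cycleGraph (n + 4)) = 1 :=
  hbar_eq_one_of_forall_exists_iso (cycleGraph_cliqueFree_three n)
    (cycleGraph_neighborSet_nontrivial (n + 1)) (cycleGraph.bicoloring_of_even _ hn)
    (cycleGraph.exists_iso_coloring_eq_comp (n + 2))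

lemma isEmpty_graphPreorders_cycleGraph_of_odd (hn : Odd (n + 4)) :
    IsEmpty (GraphPreorders (cycleGraph (n + 4))) :=
  have := cycleGraph.isEmpty_coloring_bool_of_odd (by omega) hn
  (cycleGraphPreordersEquivColoring n).isEmpty

lemma tau_cycleGraph_of_odd (hn : Odd (n + 4)) : tau (cycleGraph (n + 4)) = 0 :=
  have := isEmpty_graphPreorders_cycleGraph_of_odd n hn
  Nat.card_of_isEmpty

lemma hbar_cycleGraph_of_odd (hn : Odd (n + 4)) : hbar (cycleGraph (n + 4)) = 0 :=
  have := isEmpty_graphPreorders_cycleGraph_of_odd n hn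
  Nat.card_of_isEmpty

end Cycle

section Computation

variable (G)

/-- Bool-valued form of `GraphPreorders G`, on which `decide` can enumerate. -/
abbrev BoolGraphPreorders : Type _ :=
  {f : V → V → Bool // (∀ x, f x x) ∧ (∀ x y z, f x y → f y z → f x z) ∧
    ∀ x y, x ≠ y ∧ (f x y ∨ f y x) ↔ G.Adj x y}

noncomputable def graphPreordersEquivBool : GraphPreorders G ≃ BoolGraphPreorders G :=
  Equiv.subtypeEquiv (Equiv.piCongrRight fun _ => Equiv.piCongrRight fun _ => Equiv.propEquivBool)
    fun R => by
      simp [Equiv.propEquivBool, IsPreorderRel, Reflexive, Transitive, SimpleGraph.ext_iff,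
        funext_iff, underGraph_adj, and_assoc]

noncomputable def boolPreSetoid : Setoid (BoolGraphPreorders G) :=
  (preSetoid G).comap (graphPreordersEquivBool G).symm

noncomputable instance [Fintype V] [DecidableEq V] [DecidableRel G.Adj] :
    Fintype (Quotient (boolPreSetoid G)) :=
  @Quotient.fintype _ _ _ fun f g =>
    decidable_of_iff (∃ σ : V ≃ V, ∀ x y, f.1 x y = g.1 (σ x) (σ y)) (by
      change _ ↔ ∃ σ : V ≃ V, ∀ x y, f.1 x y = true ↔ g.1 (σ x) (σ y) = true
      exact exists_congr fun σ => forall₂_congr fun x y => Bool.eq_iff_iff)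

lemma tau_eq_card_bool : tau G = Nat.card (BoolGraphPreorders G) :=
  Nat.card_congr (graphPreordersEquivBool G)

lemma hbar_eq_card_bool : hbar G = Nat.card (Quotient (boolPreSetoid G)) :=
  Nat.card_congr (Quotient.congr (graphPreordersEquivBool G) fun a b => by
    change _ ↔ preSetoid G ((graphPreordersEquivBool G).symm (graphPreordersEquivBool G a))
      ((graphPreordersEquivBool G).symm (graphPreordersEquivBool G b))
    rw [Equiv.symm_apply_apply, Equiv.symm_apply_apply])

end Computation

lemma tau_cycleGraph_three : tau (cycleGraph 3) = 13 := by
  rw [tau_eq_card_bool, Nat.card_eq_fintype_card]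
  decide

lemma hbar_cycleGraph_three : hbar (cycleGraph 3) = 4 := by
  rw [hbar_eq_card_bool, Nat.card_eq_fintype_card]
  decide

/-- The values of `τ` and `ℏ` for cycle graphs. -/
theorem tau_hbar_cycleGraph (n : ℕ) (hn : 3 ≤ n) :
    (n = 3 →
      tau (SimpleGraph.cycleGraph n) = 13 ∧ hbar (SimpleGraph.cycleGraph n) = 4) ∧
    (Odd n → 5 ≤ n →
      tau (SimpleGraph.cycleGraph n) = 0 ∧ hbar (SimpleGraph.cycleGraph n) = 0) ∧
    (Even n →
      tau (SimpleGraph.cycleGraph n) = 2 ∧ hbar (SimpleGraph.cycleGraph n) = 1) := by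
  refine ⟨?_, fun hodd h5 => ?_, fun heven => ?_⟩
  · rintro rfl
    exact ⟨tau_cycleGraph_three, hbar_cycleGraph_three⟩
  · obtain ⟨m, rfl⟩ : ∃ m, n = m + 4 := ⟨n - 4, by omega⟩
    exact ⟨tau_cycleGraph_of_odd m hodd, hbar_cycleGraph_of_odd m hodd⟩
  · obtain ⟨m, rfl⟩ : ∃ m, n = m + 4 := ⟨n - 4, by rcases heven with ⟨k, hk⟩; omega⟩
    exact ⟨tau_cycleGraph_of_even m heven, hbar_cycleGraph_of_even m heven⟩
end
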